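/- arXiv:hep-th/9404037 — 2 statements merged into one kernel-verified Lean document; each statement's English description precedes it below -/
import Mathlib

section
/- Let M be an invertible matrix over a field written in 3×3 block form M = [[M₁₁,M₁₂,M₁₃],[M₂₁,M₂₂,M₂₃],[M₃₁,M₃₂,M₃₃]] with M₁₁ invertible, and let S be the Schur complement of M₁₁ in M (a 2×2 block matrix). Assume the (1,1) block S₁₁ of S is invertible. Then the Schur complement of S₁₁ in S equals the Schur complement of the top-left 2×2 block corner [[M₁₁,M₁₂],[M₂₁,M₂₂]] in M (quotient property of Schur complements). -/
open Matrix

/-- Quotient property of Schur complements: for an invertible 3×3-block matrix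
`M` with invertible (1,1) block `A`, letting `S` be the Schur complement of `A`
in `M` (a 2×2 block matrix) with invertible (1,1) block `S₁₁ = E - D A⁻¹ B`,
the Schur complement of `S₁₁` in `S` equals the Schur complement of the
top-left 2×2 block corner `[[A,B],[D,E]]` in `M`. -/
theorem schur_quotient_property {𝕜 : Type*} [Field 𝕜] {a b c : Type*}
    [Fintype a] [Fintype b] [Fintype c] [DecidableEq a] [DecidableEq b] [DecidableEq c]
    (A : Matrix a a 𝕜) (B : Matrix a b 𝕜) (Cm : Matrix a c 𝕜)
    (D : Matrix b a 𝕜) (E : Matrix b b 𝕜) (F : Matrix b c 𝕜)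
    (G : Matrix c a 𝕜) (H : Matrix c b 𝕜) (Km : Matrix c c 𝕜)
    (hM : IsUnit (fromBlocks (fromBlocks A B D E) (fromRows Cm F)
      (fromCols G H) Km).det)
    (hA : IsUnit A.det)
    (hS11 : IsUnit (E - D * A⁻¹ * B).det) :
    (Km - G * A⁻¹ * Cm) -
        (H - G * A⁻¹ * B) * (E - D * A⁻¹ * B)⁻¹ * (F - D * A⁻¹ * Cm) =
      Km - fromCols G H * (fromBlocks A B D E)⁻¹ * fromRows Cm F := by
  letI := hA.invertible
  letI := A.invertibleOfDetInvertible
  letI := hS11.invertible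
  letI := (E - D * A⁻¹ * B).invertibleOfDetInvertible
  have hS : (E - D * ⅟A * B) = (E - D * A⁻¹ * B) := by rw [invOf_eq_nonsing_inv]
  letI : Invertible (E - D * ⅟A * B) := hS ▸ (E - D * A⁻¹ * B).invertibleOfDetInvertible
  letI := fromBlocks₁₁Invertible A B D E
  have hinv : (fromBlocks A B D E)⁻¹ = ⅟(fromBlocks A B D E) :=
    (invOf_eq_nonsing_inv _).symm
  rw [hinv, invOf_fromBlocks₁₁_eq, fromCols_mul_fromBlocks, fromCols_mul_fromRows]
  simp only [invOf_eq_nonsing_inv, hS]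
  simp only [Matrix.mul_sub, Matrix.sub_mul, Matrix.mul_add, Matrix.add_mul,
    Matrix.neg_mul, Matrix.mul_neg, Matrix.mul_assoc]
  abel
end

section
/- Let A be an n×n matrix over a field whose subdiagonal entries are all 1 (A_{i+1,i} = 1 for 1 ≤ i ≤ n−1) and whose entries strictly below the subdiagonal are 0. Then there exists a unique upper unitriangular matrix U such that U A U⁻¹ has subdiagonal entries 1 and zero entries everywhere else except in the first row. -/
open Matrix Finset

section aux

variable {K : Type*} [Field K] {m : ℕ}

private lemma krylov_row (A : Matrix (Fin (m+1)) (Fin (m+1)) K)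
    (hsub : ∀ i j : Fin (m+1), (i : ℕ) = (j : ℕ) + 1 → A i j = 1)
    (hbelow : ∀ i j : Fin (m+1), (j : ℕ) + 1 < (i : ℕ) → A i j = 0) :
    ∀ (k : ℕ) (j : Fin (m+1)), (j : ℕ) + k ≤ m →
      (A ^ k) (Fin.last m) j = if (j : ℕ) + k = m then 1 else 0 := by
  intro k
  induction k with
  | zero =>
    intro j hj
    rw [pow_zero, Matrix.one_apply]
    by_cases h : (j : ℕ) = m
    · rw [if_pos (show Fin.last m = j from Fin.ext (by rw [Fin.val_last]; omega)),
        if_pos (by omega)]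
    · rw [if_neg (show ¬ Fin.last m = j from fun he => h (by
        have h2 := congrArg Fin.val he; rw [Fin.val_last] at h2; omega)),
        if_neg (by omega)]
  | succ k ih =>
    intro j hj
    rw [pow_succ, Matrix.mul_apply]
    by_cases h : (j : ℕ) + (k + 1) = m
    · rw [if_pos h]
      have hj1 : (j : ℕ) + 1 < m + 1 := by omega
      rw [Finset.sum_eq_single (⟨(j : ℕ) + 1, hj1⟩ : Fin (m+1))]
      · rw [ih _ (show (j:ℕ)+1+k ≤ m by omega),
          hsub ⟨(j:ℕ)+1, hj1⟩ j rfl,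
          if_pos (show (j:ℕ)+1+k = m by omega), one_mul]
      · intro x _ hx
        rcases lt_trichotomy (x : ℕ) ((j : ℕ) + 1) with hlt | heq | hgt
        · rw [ih x (by omega), if_neg (by omega), zero_mul]
        · exact absurd (Fin.ext heq) hx
        · rw [hbelow x j hgt, mul_zero]
      · exact fun hmem => absurd (Finset.mem_univ _) hmem
    · rw [if_neg h]
      apply Finset.sum_eq_zero
      intro x _
      rcases le_or_gt (x : ℕ) ((j : ℕ) + 1) with hle | hgt
      · rw [ih x (by omega), if_neg (by omega), zero_mul]
      · rw [hbelow x j hgt, mul_zero]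

private lemma unitri_det_isUnit (W : Matrix (Fin (m+1)) (Fin (m+1)) K)
    (h1 : ∀ i, W i i = 1) (h0 : ∀ i j : Fin (m+1), j < i → W i j = 0) :
    IsUnit W.det := by
  have : W.det = 1 := by
    rw [Matrix.det_of_upperTriangular (fun i j h => h0 i j h)]
    exact Finset.prod_eq_one fun i _ => h1 i
  rw [this]; exact isUnit_one

end aux

/-- Existence and uniqueness of the horizontal gauge: if `A` is an `n × n`
matrix over a field whose subdiagonal entries are all `1` and whose entries
strictly below the subdiagonal vanish, then there is a unique upper
unitriangular matrix `U` such that `U * A * U⁻¹` has subdiagonal entries `1`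
and all other entries zero except possibly those of the first row. -/
theorem horizontal_gauge_exists_unique {K : Type*} [Field K] {n : ℕ}
    (A : Matrix (Fin n) (Fin n) K)
    (hsub : ∀ i j : Fin n, (i : ℕ) = (j : ℕ) + 1 → A i j = 1)
    (hbelow : ∀ i j : Fin n, (j : ℕ) + 1 < (i : ℕ) → A i j = 0) :
    ∃! U : Matrix (Fin n) (Fin n) K,
      (∀ i : Fin n, U i i = 1) ∧
      (∀ i j : Fin n, j < i → U i j = 0) ∧
      (∀ i j : Fin n, (i : ℕ) = (j : ℕ) + 1 → (U * A * U⁻¹) i j = 1) ∧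
      (∀ i j : Fin n, (i : ℕ) ≠ 0 → (i : ℕ) ≠ (j : ℕ) + 1 →
        (U * A * U⁻¹) i j = 0) := by
  cases n with
  | zero =>
    refine ⟨1, ⟨fun i => i.elim0, fun i => i.elim0, fun i => i.elim0, fun i => i.elim0⟩,
      fun V _ => ?_⟩
    ext i j
    exact i.elim0
  | succ m =>
    set L := Fin.last m with hL
    set U : Matrix (Fin (m+1)) (Fin (m+1)) K :=
      Matrix.of fun i j => (A ^ (m - (i : ℕ))) L j with hUdef
    have key := krylov_row A hsub hbelow
    have hU1 : ∀ i, U i i = 1 := by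
      intro i
      have hi := i.isLt
      show (A ^ (m - (i : ℕ))) L i = 1
      rw [key (m - (i : ℕ)) i (by omega), if_pos (by omega)]
    have hU0 : ∀ i j : Fin (m+1), j < i → U i j = 0 := by
      intro i j hij
      have hi := i.isLt
      have hij' : (j : ℕ) < (i : ℕ) := hij
      show (A ^ (m - (i : ℕ))) L j = 0
      rw [key (m - (i : ℕ)) j (by omega), if_neg (by omega)]
    have hUdet : IsUnit U.det := unitri_det_isUnit U hU1 hU0
    -- row computation for U
    have hUA : ∀ (i j : Fin (m+1)), (U * A) i j = (A ^ (m - (i : ℕ) + 1)) L j := by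
      intro i j
      rw [pow_succ, Matrix.mul_apply, Matrix.mul_apply]
      rfl
    have hB : ∀ (i : Fin (m+1)), (i : ℕ) ≠ 0 → ∀ j,
        (U * A * U⁻¹) i j =
          if (⟨(i : ℕ) - 1, by omega⟩ : Fin (m+1)) = j then 1 else 0 := by
      intro i hi j
      have h0 := i.isLt
      have hstep : (U * A * U⁻¹) i j = (U * U⁻¹) ⟨(i : ℕ) - 1, by omega⟩ j := by
        rw [Matrix.mul_apply, Matrix.mul_apply]
        apply Finset.sum_congr rfl
        intro x _
        congr 1
        rw [hUA]
        show (A ^ (m - (i : ℕ) + 1)) L x = (A ^ (m - ((i : ℕ) - 1))) L x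
        have harith : m - (i : ℕ) + 1 = m - ((i : ℕ) - 1) := by omega
        rw [harith]
      rw [hstep, Matrix.mul_nonsing_inv U hUdet, Matrix.one_apply]
    refine ⟨U, ⟨hU1, hU0, ?_, ?_⟩, ?_⟩
    · intro i j hij
      have h0 := i.isLt
      rw [hB i (by omega) j, if_pos (Fin.ext (show (i : ℕ) - 1 = (j : ℕ) by omega))]
    · intro i j hi hij
      have h0 := i.isLt
      rw [hB i hi j, if_neg (fun he => by
        have h2 : (i : ℕ) - 1 = (j : ℕ) := congrArg Fin.val he; omega)]
    · -- uniqueness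
      intro V hV
      obtain ⟨hV1, hV0, hVs, hVo⟩ := hV
      have hVdet : IsUnit V.det := unitri_det_isUnit V hV1 hV0
      have hcomm : V * A * V⁻¹ * V = V * A := by
        rw [Matrix.mul_assoc (V * A), Matrix.nonsing_inv_mul V hVdet, Matrix.mul_one]
      have hVA : ∀ (i : Fin (m+1)), (i : ℕ) ≠ 0 → ∀ (j : Fin (m+1)),
          (V * A) i j = V ⟨(i : ℕ) - 1, by omega⟩ j := by
        intro i hi j
        have h0 := i.isLt
        conv_lhs => rw [← hcomm]
        rw [Matrix.mul_apply]
        rw [Finset.sum_eq_single (⟨(i : ℕ) - 1, by omega⟩ : Fin (m+1))]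
        · rw [hVs i _ (show (i : ℕ) = (i : ℕ) - 1 + 1 by omega), one_mul]
        · intro x _ hx
          rw [hVo i x hi (fun he => hx (Fin.ext (show (x : ℕ) = (i : ℕ) - 1 by omega))),
            zero_mul]
        · exact fun hmem => absurd (Finset.mem_univ _) hmem
      have main : ∀ (d : ℕ) (i : Fin (m+1)), (i : ℕ) + d = m → ∀ j,
          V i j = (A ^ d) L j := by
        intro d
        induction d with
        | zero =>
          intro i hi j
          have him : (i : ℕ) = m := by omega
          have hiL : L = i := Fin.ext (by rw [hL, Fin.val_last]; omega)
          rw [pow_zero, Matrix.one_apply]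
          by_cases h : i = j
          · rw [← h, if_pos hiL]
            exact hV1 i
          · rw [if_neg (fun he => h (Fin.ext (by
              have h2 := congrArg Fin.val he
              rw [hL, Fin.val_last] at h2
              omega)))]
            refine hV0 i j ?_
            have hj := j.isLt
            have hne : (j : ℕ) ≠ (i : ℕ) := fun hh => h (Fin.ext hh.symm)
            exact Fin.lt_def.mpr (by omega)
        | succ d ihd =>
          intro i hi j
          have h0 := i.isLt
          have hi1 : (i : ℕ) + 1 < m + 1 := by omega
          have hrow := hVA ⟨(i : ℕ) + 1, hi1⟩ (Nat.succ_ne_zero _) j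
          have hidx : (⟨((⟨(i : ℕ) + 1, hi1⟩ : Fin (m+1)) : ℕ) - 1, by omega⟩ : Fin (m+1)) = i :=
            Fin.ext (show (i : ℕ) + 1 - 1 = (i : ℕ) by omega)
          rw [hidx] at hrow
          rw [← hrow, Matrix.mul_apply, pow_succ, Matrix.mul_apply]
          apply Finset.sum_congr rfl
          intro x _
          rw [ihd ⟨(i : ℕ) + 1, hi1⟩ (show (i : ℕ) + 1 + d = m by omega) x]
      ext i j
      have hi := i.isLt
      rw [main (m - (i : ℕ)) i (by omega) j]
      rfl
end
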